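/- Let R be a commutative ring, d ≥ 1 an integer, s : ℤ → R with s(k) = 0 for all k < 0, and let λ = (λ_1,…,λ_d) ∈ ℕ^d and e = (e_1,…,e_d) ∈ ℕ^d be arbitrary exponent vectors. Let N ∈ ℕ satisfy N ≥ λ_j + d − 1 for all j, and set Ŝ_N(x) := Σ_{k=0}^{N} s(k)·x^{N−k}. Then the coefficient of the monomial ∏_{j=1}^{d} t_j^{N+e_j} in the polynomial (∏_{j=1}^{d} t_j^{λ_j}) · ∏_{1≤i<j≤d}(t_i − t_j) · ∏_{j=1}^{d} Ŝ_N(t_j) equals the determinant of the d×d matrix whose (i,j) entry is s(λ_j + d − i − e_j). -/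

import Mathlib

/-!
Write the Vandermonde product as `det (t_j ^ (d - 1 - i))` and absorb the factors
`t_j ^ λ_j` and `Ŝ_N(t_j)`, which depend on `t_j` alone, into column `j`. Every entry of the
resulting determinant is then a polynomial in the single variable of its column, and the
coefficient of a monomial in a product of polynomials in distinct variables is the product of
their coefficients; hence taking the coefficient commutes with the determinant entrywise.
Finally the coefficient of `x ^ (N + e)` in `x ^ a * Ŝ_N(x)` is `s (a - e)` when `a ≤ N`.
-/

open MvPolynomial Finset

theorem prod_Ioi_sub_eq_det_pow_rev {R : Type*} [CommRing R] {n : ℕ} (x : Fin n → R) :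
    ∏ i : Fin n, ∏ j ∈ Ioi i, (x i - x j) =
      Matrix.det (Matrix.of fun i j : Fin n => x j ^ (Fin.rev i : ℕ)) := by
  have h := Matrix.det_projVandermonde 1 x
  simp only [Pi.one_apply, one_mul] at h
  rw [← h, ← Matrix.det_transpose]
  congr 1
  ext i j
  simp [Matrix.projVandermonde_apply]

section SeparatedVariables

variable {R σ : Type*} [CommRing R] [Fintype σ]

theorem coeff_prod_aeval_X (p : σ → Polynomial R) (m : σ → ℕ) :
    coeff (Finsupp.equivFunOnFinite.symm m) (∏ j, Polynomial.aeval (X j) (p j)) =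
      ∏ j, (p j).coeff (m j) := by
  classical
  let n : σ → ℕ := fun j => max (p j).natDegree (m j) + 1
  have hexpand : ∀ j, Polynomial.aeval (X j) (p j) =
      ∑ k ∈ range (n j), monomial (Finsupp.single j k) ((p j).coeff k) := by
    intro j
    rw [Polynomial.aeval_eq_sum_range' (n := n j) (Nat.lt_succ_of_le (le_max_left _ _))]
    simp only [X_pow_eq_monomial, smul_monomial, smul_eq_mul, mul_one]
  have hm : m ∈ Fintype.piFinset fun j => range (n j) :=
    Fintype.mem_piFinset.2 fun j => mem_range.2 (Nat.lt_succ_of_le (le_max_right _ _))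
  simp_rw [hexpand, prod_univ_sum, ← monomial_sum_prod, ← Finsupp.equivFunOnFinite_symm_eq_sum,
    coeff_sum, coeff_monomial, Finsupp.equivFunOnFinite.symm.injective.eq_iff, sum_ite_eq',
    if_pos hm]

theorem coeff_det_aeval_X [DecidableEq σ] (P : σ → σ → Polynomial R) (m : σ → ℕ) :
    coeff (Finsupp.equivFunOnFinite.symm m)
        (Matrix.det (Matrix.of fun i j => Polynomial.aeval (X j) (P i j))) =
      Matrix.det (Matrix.of fun i j => (P i j).coeff (m j)) := by
  simp only [Matrix.det_apply, coeff_sum, coeff_smul, Matrix.of_apply, coeff_prod_aeval_X]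

end SeparatedVariables

section ReversedSegre

variable {R : Type*} [CommRing R]

noncomputable def reversedSegre (s : ℤ → R) (N : ℕ) : Polynomial R :=
  ∑ k ∈ range (N + 1), Polynomial.C (s k) * Polynomial.X ^ (N - k)

theorem coeff_X_pow_mul_reversedSegre {s : ℤ → R} (hs : ∀ k : ℤ, k < 0 → s k = 0)
    {a N : ℕ} (ha : a ≤ N) (e : ℕ) :
    (Polynomial.X ^ a * reversedSegre s N).coeff (N + e) = s ((a : ℤ) - e) := by
  rw [Polynomial.coeff_X_pow_mul', if_pos (by omega)]
  simp only [reversedSegre, Polynomial.finsetSum_coeff, Polynomial.coeff_C_mul_X_pow]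
  rcases le_or_gt e a with hea | hae
  · rw [sum_eq_single_of_mem (a - e) (mem_range.2 (by omega))
      fun k hk _ => if_neg (by rw [mem_range] at hk; omega), if_pos (by omega)]
    push_cast [hea]
    rfl
  · rw [hs _ (by omega)]
    exact sum_eq_zero fun k _ => if_neg (by omega)

end ReversedSegre

theorem stmt_14_general {R : Type*} [CommRing R] (d : ℕ)
    (s : ℤ → R) (hs : ∀ k : ℤ, k < 0 → s k = 0)
    (lam : Fin d → ℕ) (e : Fin d → ℕ)
    (N : ℕ) (hN : ∀ j : Fin d, lam j + d - 1 ≤ N) :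
    MvPolynomial.coeff
      (Finsupp.equivFunOnFinite.symm fun j : Fin d => N + e j)
      ((∏ j : Fin d, MvPolynomial.X j ^ lam j) *
        (∏ i : Fin d, ∏ j ∈ Finset.Ioi i,
          (MvPolynomial.X i - MvPolynomial.X j)) *
        ∏ j : Fin d, ∑ k ∈ Finset.range (N + 1),
          MvPolynomial.C (s k) * MvPolynomial.X j ^ (N - k))
    = Matrix.det (Matrix.of fun i j : Fin d =>
        s ((lam j : ℤ) + (d : ℤ) - (((i : ℕ) : ℤ) + 1) - (e j : ℤ))) := by
  have hsegre : ∀ j : Fin d, ∑ k ∈ range (N + 1), C (s k) * X j ^ (N - k) =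
      Polynomial.aeval (X j : MvPolynomial (Fin d) R) (reversedSegre s N) := by
    simp [reversedSegre]
  have hdet : (∏ j : Fin d, X j ^ lam j) * (∏ i : Fin d, ∏ j ∈ Ioi i, (X i - X j)) *
        ∏ j : Fin d, Polynomial.aeval (X j : MvPolynomial (Fin d) R) (reversedSegre s N) =
      Matrix.det (Matrix.of fun i j : Fin d => Polynomial.aeval (X j)
        (Polynomial.X ^ (lam j + Fin.rev i) * reversedSegre s N)) := by
    rw [prod_Ioi_sub_eq_det_pow_rev, mul_right_comm, ← prod_mul_distrib, ← Matrix.det_mul_row]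
    congr 1
    ext i j : 1
    simp only [Matrix.of_apply, map_mul, map_pow, Polynomial.aeval_X, pow_add]
    ring
  simp_rw [hsegre, hdet, coeff_det_aeval_X]
  congr 1
  ext i j
  have hi := i.isLt
  have hexp : lam j + (Fin.rev i : ℕ) ≤ N := by
    have := hN j
    rw [Fin.val_rev]
    omega
  rw [Matrix.of_apply, coeff_X_pow_mul_reversedSegre hs hexp, Fin.val_rev]
  congr 1
  omega

/-- Intermediate determinantal identity in the proof of Proposition 5.2 (Vandermonde
expansion plus the linearity Lemma 5.1): for arbitrary exponents `e_j`, the coefficient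
of `∏_j t_j^{N+e_j}` in `(∏_j t_j^{λ_j}) ⬝ ∏_{i<j}(t_i - t_j) ⬝ ∏_j Ŝ_N(t_j)` equals
`det(s(λ_j + d - i - e_j))`. -/
theorem stmt_14 {R : Type*} [CommRing R] (d : ℕ) (hd : 1 ≤ d)
    (s : ℤ → R) (hs : ∀ k : ℤ, k < 0 → s k = 0)
    (lam : Fin d → ℕ) (e : Fin d → ℕ)
    (N : ℕ) (hN : ∀ j : Fin d, lam j + d - 1 ≤ N) :
    MvPolynomial.coeff
      (Finsupp.equivFunOnFinite.symm fun j : Fin d => N + e j)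
      ((∏ j : Fin d, MvPolynomial.X j ^ lam j) *
        (∏ i : Fin d, ∏ j ∈ Finset.Ioi i,
          (MvPolynomial.X i - MvPolynomial.X j)) *
        ∏ j : Fin d, ∑ k ∈ Finset.range (N + 1),
          MvPolynomial.C (s k) * MvPolynomial.X j ^ (N - k))
    = Matrix.det (Matrix.of fun i j : Fin d =>
        s ((lam j : ℤ) + (d : ℤ) - (((i : ℕ) : ℤ) + 1) - (e j : ℤ))) :=
  stmt_14_general d s hs lam e N hN
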